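/- Let H be a real inner product space, f ∈ H, λ ≥ 0, μ ∈ [0,1], and C > 0. Then ⟪f, e⟫ ≤ μ·‖f‖·‖e‖ + (1−μ)·‖f‖·‖e‖ for any e ∈ H, and more specifically: if e ∈ H and there exist seminorms satisfying ‖e‖_λ and ‖e‖_∇ with ‖μ f‖_{1/λ} and ‖(1−μ)f‖ finite, then ∫ f·e ≤ ‖μ f/√λ‖ · ‖√λ e‖ + C·‖(1−μ) f‖ · ‖∇e‖ whenever ‖e‖ ≤ C‖∇e‖ (Friedrichs) and λ > 0 a.e. -/
import Mathlib


open MeasureTheory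
open scoped InnerProductSpace

/-- Cauchy–Schwarz for integrals with only integrability hypotheses. -/
lemma integral_cauchy_schwarz {α : Type*} [MeasureSpace α] (a b : α → ℝ)
    (hab : Integrable (fun x => a x * b x))
    (ha : Integrable (fun x => (a x) ^ 2))
    (hb : Integrable (fun x => (b x) ^ 2)) :
    ∫ x, a x * b x ≤ Real.sqrt (∫ x, (a x) ^ 2) * Real.sqrt (∫ x, (b x) ^ 2) := by
  set A := ∫ x, (a x) ^ 2 with hA
  set B := ∫ x, a x * b x with hB
  set Cc := ∫ x, (b x) ^ 2 with hCc
  have hA0 : 0 ≤ A := integral_nonneg fun x => sq_nonneg _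
  have hC0 : 0 ≤ Cc := integral_nonneg fun x => sq_nonneg _
  have key : ∀ t : ℝ, 0 ≤ t ^ 2 * A - 2 * t * B + Cc := by
    intro t
    have hInt1 : Integrable (fun x => t ^ 2 * (a x) ^ 2) := ha.const_mul (t ^ 2)
    have hInt2 : Integrable (fun x => 2 * t * (a x * b x)) := hab.const_mul (2 * t)
    have hInt12 : Integrable (fun x => t ^ 2 * (a x) ^ 2 - 2 * t * (a x * b x)) := by
      exact hInt1.sub hInt2
    have h1 : (0:ℝ) ≤ ∫ x, (t * a x - b x) ^ 2 := integral_nonneg fun x => sq_nonneg _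
    have h2 : ∫ x, (t * a x - b x) ^ 2
        = ∫ x, (t ^ 2 * (a x) ^ 2 - 2 * t * (a x * b x) + (b x) ^ 2) := by
      apply integral_congr_ae
      filter_upwards with x
      ring
    have h3 : ∫ x, (t ^ 2 * (a x) ^ 2 - 2 * t * (a x * b x) + (b x) ^ 2)
        = t ^ 2 * A - 2 * t * B + Cc := by
      rw [integral_add hInt12 hb, integral_sub hInt1 hInt2,
        integral_const_mul, integral_const_mul]
    rw [h2, h3] at h1
    exact h1
  rcases le_or_gt B 0 with hBle | hBpos
  · exact hBle.trans (mul_nonneg (Real.sqrt_nonneg _) (Real.sqrt_nonneg _))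
  · have hApos : 0 < A := by
      rcases hA0.lt_or_eq with h | h
      · exact h
      · exfalso
        have h2 := key ((Cc + 1) / (2 * B))
        rw [← h] at h2
        have hbb : (0:ℝ) < 2 * B := by linarith
        have h4 : 2 * ((Cc + 1) / (2 * B)) * B = Cc + 1 := by field_simp
        nlinarith
    have hB2 : B ^ 2 ≤ A * Cc := by
      have h2 := key (B / A)
      have h1 : (B / A) ^ 2 * A = B ^ 2 / A := by field_simp
      have h1' : 2 * (B / A) * B = 2 * (B ^ 2 / A) := by field_simp
      rw [h1, h1'] at h2
      have h3 : B ^ 2 / A ≤ Cc := by linarith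
      have h4 := (div_le_iff₀ hApos).mp h3
      nlinarith [h4]
    have hsq : B ≤ Real.sqrt (A * Cc) := by
      rw [show B = Real.sqrt (B ^ 2) from (Real.sqrt_sq hBpos.le).symm]
      exact Real.sqrt_le_sqrt hB2
    rwa [Real.sqrt_mul hA0] at hsq

/-- The μ-splitting estimate (2.13): the residual pairing is split as
`∫ f e = ∫ (μ f) e + ∫ ((1−μ) f) e`, the first part bounded by weighted
Cauchy–Schwarz against `‖√λ e‖`, the second via Friedrichs `‖e‖ ≤ C‖∇e‖`,
where `G` plays the role of `‖∇e‖`. -/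
theorem mu_splitting_estimate {H : Type*} [NormedAddCommGroup H] [InnerProductSpace ℝ H]
    (f₀ e₀ : H) (μ : ℝ) (hμ : 0 ≤ μ) (hμ1 : μ ≤ 1)
    {α : Type*} [MeasureSpace α] (f e lam : α → ℝ) (C G : ℝ) (hC : 0 < C) (hG : 0 ≤ G)
    (hlam : ∀ᵐ x, 0 < lam x)
    (hint_fe : Integrable (fun x => f x * e x))
    (hint_wf : Integrable (fun x => (μ * f x) ^ 2 / lam x))
    (hint_le : Integrable (fun x => lam x * (e x) ^ 2))
    (hint_f2 : Integrable (fun x => ((1 - μ) * f x) ^ 2))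
    (hint_e2 : Integrable (fun x => (e x) ^ 2))
    (hFriedrichs : Real.sqrt (∫ x, (e x) ^ 2) ≤ C * G) :
    ⟪f₀, e₀⟫_ℝ ≤ μ * ‖f₀‖ * ‖e₀‖ + (1 - μ) * ‖f₀‖ * ‖e₀‖ ∧
    ∫ x, f x * e x ≤
      Real.sqrt (∫ x, (μ * f x) ^ 2 / lam x) * Real.sqrt (∫ x, lam x * (e x) ^ 2) +
        C * Real.sqrt (∫ x, ((1 - μ) * f x) ^ 2) * G := by
  constructor
  · have h := real_inner_le_norm f₀ e₀
    nlinarith [norm_nonneg f₀, norm_nonneg e₀]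
  · have hfe_mu : Integrable (fun x => μ * (f x * e x)) := hint_fe.const_mul μ
    have hfe_1mu : Integrable (fun x => (1 - μ) * (f x * e x)) := hint_fe.const_mul (1 - μ)
    set a1 : α → ℝ := fun x => μ * f x / Real.sqrt (lam x) with ha1
    set b1 : α → ℝ := fun x => Real.sqrt (lam x) * e x with hb1
    have hae1 : (fun x => a1 x * b1 x) =ᵐ[volume] fun x => μ * (f x * e x) := by
      filter_upwards [hlam] with x hx
      have hs : Real.sqrt (lam x) ≠ 0 := ne_of_gt (Real.sqrt_pos.mpr hx)
      simp only [ha1, hb1]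
      field_simp
    have hae2 : (fun x => (a1 x) ^ 2) =ᵐ[volume] fun x => (μ * f x) ^ 2 / lam x := by
      filter_upwards [hlam] with x hx
      simp only [ha1]
      rw [div_pow, Real.sq_sqrt hx.le]
    have hae3 : (fun x => (b1 x) ^ 2) =ᵐ[volume] fun x => lam x * (e x) ^ 2 := by
      filter_upwards [hlam] with x hx
      simp only [hb1]
      rw [mul_pow, Real.sq_sqrt hx.le]
    have cs1 := integral_cauchy_schwarz a1 b1 (hfe_mu.congr hae1.symm)
      (hint_wf.congr hae2.symm) (hint_le.congr hae3.symm)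
    have key1 : ∫ x, μ * (f x * e x) ≤
        Real.sqrt (∫ x, (μ * f x) ^ 2 / lam x) * Real.sqrt (∫ x, lam x * (e x) ^ 2) := by
      calc ∫ x, μ * (f x * e x) = ∫ x, a1 x * b1 x := (integral_congr_ae hae1).symm
        _ ≤ Real.sqrt (∫ x, (a1 x) ^ 2) * Real.sqrt (∫ x, (b1 x) ^ 2) := cs1
        _ = _ := by rw [integral_congr_ae hae2, integral_congr_ae hae3]
    have cs2 := integral_cauchy_schwarz (fun x => (1 - μ) * f x) e
      (hfe_1mu.congr (by filter_upwards with x; ring)) hint_f2 hint_e2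
    have key2 : ∫ x, (1 - μ) * (f x * e x) ≤
        Real.sqrt (∫ x, ((1 - μ) * f x) ^ 2) * (C * G) := by
      calc ∫ x, (1 - μ) * (f x * e x) = ∫ x, (1 - μ) * f x * e x := by
            apply integral_congr_ae
            filter_upwards with x
            ring
        _ ≤ Real.sqrt (∫ x, ((1 - μ) * f x) ^ 2) * Real.sqrt (∫ x, (e x) ^ 2) := cs2
        _ ≤ Real.sqrt (∫ x, ((1 - μ) * f x) ^ 2) * (C * G) :=
            mul_le_mul_of_nonneg_left hFriedrichs (Real.sqrt_nonneg _)
    have hsplit : ∫ x, f x * e x = (∫ x, μ * (f x * e x)) + ∫ x, (1 - μ) * (f x * e x) := by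
      rw [← integral_add hfe_mu hfe_1mu]
      apply integral_congr_ae
      filter_upwards with x
      ring
    rw [hsplit]
    calc (∫ x, μ * (f x * e x)) + ∫ x, (1 - μ) * (f x * e x)
        ≤ Real.sqrt (∫ x, (μ * f x) ^ 2 / lam x) * Real.sqrt (∫ x, lam x * (e x) ^ 2) +
          Real.sqrt (∫ x, ((1 - μ) * f x) ^ 2) * (C * G) := add_le_add key1 key2
      _ = _ := by ring
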